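/- arXiv:hep-th/0602102 — 5 statements merged into one kernel-verified Lean document; each statement's English description precedes it below -/
import Mathlib

section
/- For integers m, n > 1 with m + n ≥ 10, the eigenvalues λ₁ > λ₂ > 0 of the matrix (1/(m+n))·[[0,1],[−2(m+n−1), m+n−1]] satisfy λ₁ ≥ 2λ₂. -/
/-!
The characteristic polynomial of `M = N⁻¹ • !![0, 1; -2(N - 1), N - 1]` is
`λ² - (N - 1)/N · λ + 2(N - 1)/N²`, whose discriminant is `(N - 1)(N - 9)/N²`; for `N ≥ 10`
its roots are real, positive and distinct. With `s = √((N - 1)(N - 9))`, the inequality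
`λ₁ ≥ 2λ₂` reads `N - 1 ≤ 3s`, i.e. `(N - 1)² ≤ 9(N - 1)(N - 9)`, i.e. `N ≥ 10`: the bound on
`m + n` is exactly the threshold.
-/

open Matrix

theorem Matrix.det_smul_one_sub_smul_fin_two {R : Type*} [CommRing R] (l c : R)
    (A : Matrix (Fin 2) (Fin 2) R) :
    (l • (1 : Matrix (Fin 2) (Fin 2) R) - c • A).det = l ^ 2 - c * A.trace * l + c ^ 2 * A.det := by
  simp [det_fin_two, trace_fin_two]
  ring

theorem friedmann_det_eq_mul {K : Type*} [Field K] [NeZero (2 : K)] {N s : K} (hN : N ≠ 0)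
    (hs : s ^ 2 = (N - 1) * (N - 9)) (l : K) :
    (l • (1 : Matrix (Fin 2) (Fin 2) K) - N⁻¹ • !![0, 1; -2 * (N - 1), N - 1]).det =
      (l - ((N - 1) + s) / (2 * N)) * (l - ((N - 1) - s) / (2 * N)) := by
  rw [det_smul_one_sub_smul_fin_two, trace_fin_two_of, det_fin_two_of]
  field_simp
  linear_combination hs

theorem friedmann_sqrt_discr_pos {N : ℝ} (hN : 9 < N) : 0 < √((N - 1) * (N - 9)) :=
  Real.sqrt_pos.2 (by nlinarith)

theorem friedmann_sqrt_discr_lt {N : ℝ} (hN : 1 < N) : √((N - 1) * (N - 9)) < N - 1 :=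
  (Real.sqrt_lt' (by linarith)).2 (by nlinarith)

theorem friedmann_le_three_mul_sqrt_discr {N : ℝ} (hN : 10 ≤ N) :
    N - 1 ≤ 3 * √((N - 1) * (N - 9)) :=
  (div_le_iff₀' three_pos).1 (Real.le_sqrt_of_sq_le (by nlinarith))

theorem friedmann_eigenvalue_ratio_general (m n : ℕ)
    (hd : 10 ≤ m + n) :
    let N : ℝ := (m : ℝ) + n
    let s : ℝ := Real.sqrt ((N - 1) * (N - 9))
    let l₁ : ℝ := ((N - 1) + s) / (2 * N)
    let l₂ : ℝ := ((N - 1) - s) / (2 * N)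
    let M : Matrix (Fin 2) (Fin 2) ℝ := N⁻¹ • !![0, 1; -2 * (N - 1), N - 1]
    (l₁ • (1 : Matrix (Fin 2) (Fin 2) ℝ) - M).det = 0 ∧
    (l₂ • (1 : Matrix (Fin 2) (Fin 2) ℝ) - M).det = 0 ∧
    0 < l₂ ∧ l₂ < l₁ ∧ l₁ ≥ 2 * l₂ := by
  intro N s l₁ l₂ M
  have hN : (10 : ℝ) ≤ N := by
    change (10 : ℝ) ≤ m + n
    exact_mod_cast hd
  have hN0 : N ≠ 0 := by positivity
  have h2N : 0 < 2 * N := by positivity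
  have hs : s ^ 2 = (N - 1) * (N - 9) := Real.sq_sqrt (by nlinarith)
  have hs_pos : 0 < s := friedmann_sqrt_discr_pos (by linarith)
  have hs_lt : s < N - 1 := friedmann_sqrt_discr_lt (by linarith)
  have hs_ge : N - 1 ≤ 3 * s := friedmann_le_three_mul_sqrt_discr hN
  refine ⟨?_, ?_, ?_, ?_, ?_⟩
  · exact (friedmann_det_eq_mul hN0 hs l₁).trans (mul_eq_zero_of_left (sub_self l₁) _)
  · exact (friedmann_det_eq_mul hN0 hs l₂).trans (mul_eq_zero_of_right _ (sub_self l₂))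
  · exact div_pos (by linarith) h2N
  · exact div_lt_div_of_pos_right (by linarith) h2N
  · rw [ge_iff_le, ← mul_div_assoc, div_le_div_iff_of_pos_right h2N]
    linarith

/-- For `m + n ≥ 10`, the eigenvalues `λ₁ > λ₂ > 0` of the linearization at the
Friedmann fixed point satisfy `λ₁ ≥ 2 λ₂`. -/
theorem friedmann_eigenvalue_ratio (m n : ℕ) (hm : 1 < m) (hn : 1 < n)
    (hd : 10 ≤ m + n) :
    let N : ℝ := (m : ℝ) + n
    let s : ℝ := Real.sqrt ((N - 1) * (N - 9))
    let l₁ : ℝ := ((N - 1) + s) / (2 * N)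
    let l₂ : ℝ := ((N - 1) - s) / (2 * N)
    let M : Matrix (Fin 2) (Fin 2) ℝ := N⁻¹ • !![0, 1; -2 * (N - 1), N - 1]
    (l₁ • (1 : Matrix (Fin 2) (Fin 2) ℝ) - M).det = 0 ∧
    (l₂ • (1 : Matrix (Fin 2) (Fin 2) ℝ) - M).det = 0 ∧
    0 < l₂ ∧ l₂ < l₁ ∧ l₁ ≥ 2 * l₂ :=
  friedmann_eigenvalue_ratio_general m n hd
end

section
/- Let m, n > 1 be integers and define Z = A^m B^n on the state space {mP + nQ = 1, mP² + nQ² + (m+n−1)(mA² + nB²) = 1, A > 0, B > 0}. Along the flow A' = A[P − (mP² + nQ²)], B' = B[Q − (mP² + nQ²)], one has Z' = Z[1 − (m+n)(mP² + nQ²)], and Z' ≤ 0 on the state space, with Z' = 0 if and only if P = Q = 1/(m+n). -/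
/-!
Logarithmic differentiation gives `Z'/Z = m A'/A + n B'/B = mP + nQ - (m+n)(mP² + nQ²)`, and
with `mP + nQ = 1` the identity `(mP + nQ)² - (m+n)(mP² + nQ²) = -mn(P - Q)²` shows that
`Z' = -mn(P - Q)² Z`. Since `Z > 0`, this is nonpositive and vanishes exactly when `P = Q`,
which together with `mP + nQ = 1` means `P = Q = 1/(m+n)`.
-/

theorem HasDerivAt.pow_of_self_mul {f : ℝ → ℝ} {u x : ℝ} (hf : HasDerivAt f (f x * u) x)
    (k : ℕ) : HasDerivAt (fun t => f t ^ k) (f x ^ k * (k * u)) x := by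
  cases k with
  | zero => simpa using hasDerivAt_const x (1 : ℝ)
  | succ k =>
    refine (hf.fun_pow (k + 1)).congr_deriv ?_
    push_cast
    ring

theorem HasDerivAt.pow_mul_pow_of_self_mul {f g : ℝ → ℝ} {u v x : ℝ}
    (hf : HasDerivAt f (f x * u) x) (hg : HasDerivAt g (g x * v) x) (m n : ℕ) :
    HasDerivAt (fun t => f t ^ m * g t ^ n) (f x ^ m * g x ^ n * (m * u + n * v)) x := by
  refine ((hf.pow_of_self_mul m).fun_mul (hg.pow_of_self_mul n)).congr_deriv ?_
  ring

theorem sq_weighted_sum_sub_mul_weighted_sum_sq {R : Type*} [CommRing R] (m n p q : R) :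
    (m * p + n * q) ^ 2 - (m + n) * (m * p ^ 2 + n * q ^ 2) = -(m * n * (p - q) ^ 2) := by
  ring

theorem mul_mul_sub_sq_eq_zero_iff {m n p q : ℝ} (hm : 0 < m) (hn : 0 < n)
    (htrace : m * p + n * q = 1) :
    m * n * (p - q) ^ 2 = 0 ↔ p = 1 / (m + n) ∧ q = 1 / (m + n) := by
  have hmn : m + n ≠ 0 := by positivity
  rw [mul_eq_zero, or_iff_right (mul_pos hm hn).ne', sq_eq_zero_iff, sub_eq_zero]
  constructor
  · rintro rfl
    have hp : p = 1 / (m + n) := by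
      field_simp
      linarith
    exact ⟨hp, hp⟩
  · rintro ⟨hp, hq⟩
    rw [hp, hq]

theorem Z_monotone_general (m n : ℕ) (hm : 1 < m) (hn : 1 < n)
    (A B P Q : ℝ → ℝ)
    (hA : ∀ τ, HasDerivAt A (A τ * (P τ - ((m : ℝ) * (P τ) ^ 2 + n * (Q τ) ^ 2))) τ)
    (hB : ∀ τ, HasDerivAt B (B τ * (Q τ - ((m : ℝ) * (P τ) ^ 2 + n * (Q τ) ^ 2))) τ)
    (htrace : ∀ τ, (m : ℝ) * P τ + n * Q τ = 1)
    (hApos : ∀ τ, 0 < A τ) (hBpos : ∀ τ, 0 < B τ) :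
    ∀ τ, HasDerivAt (fun t => A t ^ m * B t ^ n)
        ((A τ ^ m * B τ ^ n) * (1 - ((m : ℝ) + n) * ((m : ℝ) * (P τ) ^ 2 + n * (Q τ) ^ 2))) τ ∧
      (A τ ^ m * B τ ^ n) * (1 - ((m : ℝ) + n) * ((m : ℝ) * (P τ) ^ 2 + n * (Q τ) ^ 2)) ≤ 0 ∧
      ((A τ ^ m * B τ ^ n) * (1 - ((m : ℝ) + n) * ((m : ℝ) * (P τ) ^ 2 + n * (Q τ) ^ 2)) = 0 ↔
        P τ = 1 / ((m : ℝ) + n) ∧ Q τ = 1 / ((m : ℝ) + n)) := by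
  intro τ
  have hZ : 0 < A τ ^ m * B τ ^ n := by have := hApos τ; have := hBpos τ; positivity
  have hrate : 1 - ((m : ℝ) + n) * ((m : ℝ) * (P τ) ^ 2 + n * (Q τ) ^ 2)
      = -((m : ℝ) * n * (P τ - Q τ) ^ 2) := by
    rw [← sq_weighted_sum_sub_mul_weighted_sum_sq, htrace τ, one_pow]
  refine ⟨((hA τ).pow_mul_pow_of_self_mul (hB τ) m n).congr_deriv ?_, ?_, ?_⟩
  · rw [← htrace τ]
    ring
  · rw [hrate, mul_neg, neg_nonpos]
    positivity
  · rw [hrate, mul_neg, neg_eq_zero, mul_eq_zero, or_iff_right hZ.ne']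
    exact mul_mul_sub_sq_eq_zero_iff (by positivity) (by positivity) (htrace τ)

/-- Along the flow of the scale-invariant system, `Z = A^m B^n` satisfies
`Z' = Z [1 - (m+n)(mP² + nQ²)]`, which is nonpositive on the state space, vanishing
iff `P = Q = 1/(m+n)`. -/
theorem Z_monotone (m n : ℕ) (hm : 1 < m) (hn : 1 < n)
    (A B P Q : ℝ → ℝ)
    (hA : ∀ τ, HasDerivAt A (A τ * (P τ - ((m : ℝ) * (P τ) ^ 2 + n * (Q τ) ^ 2))) τ)
    (hB : ∀ τ, HasDerivAt B (B τ * (Q τ - ((m : ℝ) * (P τ) ^ 2 + n * (Q τ) ^ 2))) τ)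
    (htrace : ∀ τ, (m : ℝ) * P τ + n * Q τ = 1)
    (hham : ∀ τ, (m : ℝ) * (P τ) ^ 2 + n * (Q τ) ^ 2
      + ((m : ℝ) + n - 1) * ((m : ℝ) * (A τ) ^ 2 + n * (B τ) ^ 2) = 1)
    (hApos : ∀ τ, 0 < A τ) (hBpos : ∀ τ, 0 < B τ) :
    ∀ τ, HasDerivAt (fun t => A t ^ m * B t ^ n)
        ((A τ ^ m * B τ ^ n) * (1 - ((m : ℝ) + n) * ((m : ℝ) * (P τ) ^ 2 + n * (Q τ) ^ 2))) τ ∧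
      (A τ ^ m * B τ ^ n) * (1 - ((m : ℝ) + n) * ((m : ℝ) * (P τ) ^ 2 + n * (Q τ) ^ 2)) ≤ 0 ∧
      ((A τ ^ m * B τ ^ n) * (1 - ((m : ℝ) + n) * ((m : ℝ) * (P τ) ^ 2 + n * (Q τ) ^ 2)) = 0 ↔
        P τ = 1 / ((m : ℝ) + n) ∧ Q τ = 1 / ((m : ℝ) + n)) :=
  Z_monotone_general m n hm hn A B P Q hA hB htrace hApos hBpos
end

section
/- Let m, n > 1 be integers. On the set {mP + nQ = 1, mP² + nQ² + (m+n−1)(mA² + nB²) = 1, A ≥ 0, B ≥ 0}, the function Z = A^m B^n attains its maximum precisely at the point A = B = P = Q = 1/(m+n). -/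
/-!
Write `t = m + n` and `M = (m A² + n B²) / t` for the weighted mean of the squares. The two
constraints combine into `M = 1/t² - m n (P - Q)² / (t² (t - 1))`, so `M ≤ 1/t²` with equality
exactly when `P = Q`. Weighted AM-GM with weights `m/t, n/t` gives
`Z² = (A²)^m (B²)^n ≤ M^t ≤ (1/t²)^t`, with equality in the first step exactly when `A² = B²`.
-/

open Real

section WeightedAMGM

variable {m n : ℕ} {x y : ℝ}

theorem rpow_div_mul_rpow_div_pow_add (hmn : m + n ≠ 0) (hx : 0 ≤ x) (hy : 0 ≤ y) :
    (x ^ ((m : ℝ) / (m + n)) * y ^ ((n : ℝ) / (m + n))) ^ (m + n) = x ^ m * y ^ n := by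
  have ht : (m : ℝ) + n ≠ 0 := by exact_mod_cast hmn
  rw [mul_pow, ← rpow_natCast, ← rpow_natCast, ← rpow_mul hx, ← rpow_mul hy]
  push_cast
  rw [div_mul_cancel₀ _ ht, div_mul_cancel₀ _ ht, rpow_natCast, rpow_natCast]

theorem weighted_mean_eq_div_mul_add_div_mul (hmn : m + n ≠ 0) :
    ((m : ℝ) * x + n * y) / (m + n) = (m : ℝ) / (m + n) * x + (n : ℝ) / (m + n) * y := by
  have ht : (m : ℝ) + n ≠ 0 := by exact_mod_cast hmn
  field_simp

theorem natCast_div_add_natCast_div_eq_one (hmn : m + n ≠ 0) :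
    (m : ℝ) / (m + n) + (n : ℝ) / (m + n) = 1 := by
  have ht : (m : ℝ) + n ≠ 0 := by exact_mod_cast hmn
  field_simp

theorem pow_mul_pow_le_weighted_mean_pow (hx : 0 ≤ x) (hy : 0 ≤ y) :
    x ^ m * y ^ n ≤ ((m * x + n * y) / (m + n)) ^ (m + n) := by
  rcases Nat.eq_zero_or_pos (m + n) with hmn | hmn
  · obtain ⟨rfl, rfl⟩ := Nat.add_eq_zero_iff.1 hmn
    simp
  have amgm := geom_mean_le_arith_mean2_weighted (p₁ := x) (p₂ := y) (by positivity)
    (by positivity) hx hy (natCast_div_add_natCast_div_eq_one hmn.ne')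
  rw [← rpow_div_mul_rpow_div_pow_add hmn.ne' hx hy,
    weighted_mean_eq_div_mul_add_div_mul hmn.ne']
  exact pow_le_pow_left₀ (by positivity) amgm _

theorem pow_mul_pow_lt_weighted_mean_pow_iff (hm : 0 < m) (hn : 0 < n) (hx : 0 ≤ x)
    (hy : 0 ≤ y) : x ^ m * y ^ n < ((m * x + n * y) / (m + n)) ^ (m + n) ↔ x ≠ y := by
  have hmn : m + n ≠ 0 := by omega
  rw [← rpow_div_mul_rpow_div_pow_add hmn hx hy, weighted_mean_eq_div_mul_add_div_mul hmn,
    pow_lt_pow_iff_left₀ (by positivity) (by positivity) hmn]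
  exact geom_mean_lt_arith_mean2_weighted_iff_of_pos (by positivity) (by positivity) hx hy
    (natCast_div_add_natCast_div_eq_one hmn)

end WeightedAMGM

section Constraints

variable {m n A B P Q : ℝ}

theorem mean_sq_eq_of_constraints (hmn : 1 < m + n) (htrace : m * P + n * Q = 1)
    (hham : m * P ^ 2 + n * Q ^ 2 + (m + n - 1) * (m * A ^ 2 + n * B ^ 2) = 1) :
    (m * A ^ 2 + n * B ^ 2) / (m + n)
      = (1 / (m + n)) ^ 2 - m * n * (P - Q) ^ 2 / ((m + n) ^ 2 * (m + n - 1)) := by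
  have ht : m + n ≠ 0 := by linarith
  have ht1 : m + n - 1 ≠ 0 := by linarith
  have key : (m + n) * (m + n - 1) * (m * A ^ 2 + n * B ^ 2) + m * n * (P - Q) ^ 2
      = m + n - 1 := by
    -- Lagrange: `(m + n) (m P² + n Q²) = (m P + n Q)² + m n (P - Q)²`
    linear_combination (m + n) * hham - (m * P + n * Q + 1) * htrace
  field_simp
  linear_combination key

theorem mean_sq_le_of_constraints (hm : 0 ≤ m) (hn : 0 ≤ n) (hmn : 1 < m + n)
    (htrace : m * P + n * Q = 1)
    (hham : m * P ^ 2 + n * Q ^ 2 + (m + n - 1) * (m * A ^ 2 + n * B ^ 2) = 1) :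
    (m * A ^ 2 + n * B ^ 2) / (m + n) ≤ (1 / (m + n)) ^ 2 := by
  have hdef : 0 ≤ m * n * (P - Q) ^ 2 / ((m + n) ^ 2 * (m + n - 1)) := by
    have : 0 < m + n - 1 := by linarith
    positivity
  rw [mean_sq_eq_of_constraints hmn htrace hham]
  linarith

theorem mean_sq_eq_iff_of_constraints (hm : m ≠ 0) (hn : n ≠ 0) (hmn : 1 < m + n)
    (htrace : m * P + n * Q = 1)
    (hham : m * P ^ 2 + n * Q ^ 2 + (m + n - 1) * (m * A ^ 2 + n * B ^ 2) = 1) :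
    (m * A ^ 2 + n * B ^ 2) / (m + n) = (1 / (m + n)) ^ 2 ↔ P = Q := by
  have ht : m + n ≠ 0 := by linarith
  have ht1 : m + n - 1 ≠ 0 := by linarith
  rw [mean_sq_eq_of_constraints hmn htrace hham, sub_eq_self, div_eq_zero_iff]
  simp [hm, hn, ht, ht1, sub_eq_zero]

end Constraints

/-- On the closed constraint set, `Z = A^m B^n` attains its maximum precisely at the
Friedmann point `A = B = P = Q = 1/(m+n)`. -/
theorem Z_max_at_friedmann (m n : ℕ) (hm : 1 < m) (hn : 1 < n)
    (A B P Q : ℝ)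
    (htrace : (m : ℝ) * P + n * Q = 1)
    (hham : (m : ℝ) * P ^ 2 + n * Q ^ 2
      + ((m : ℝ) + n - 1) * ((m : ℝ) * A ^ 2 + n * B ^ 2) = 1)
    (hA : 0 ≤ A) (hB : 0 ≤ B) :
    A ^ m * B ^ n ≤ (1 / ((m : ℝ) + n)) ^ m * (1 / ((m : ℝ) + n)) ^ n ∧
    (A ^ m * B ^ n = (1 / ((m : ℝ) + n)) ^ m * (1 / ((m : ℝ) + n)) ^ n ↔
      A = 1 / ((m : ℝ) + n) ∧ B = 1 / ((m : ℝ) + n) ∧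
      P = 1 / ((m : ℝ) + n) ∧ Q = 1 / ((m : ℝ) + n)) := by
  have hm0 : 0 < m := by omega
  have hn0 : 0 < n := by omega
  have hmn : (1 : ℝ) < m + n := by norm_cast; omega
  set c := 1 / ((m : ℝ) + n) with hc
  set M := ((m : ℝ) * A ^ 2 + n * B ^ 2) / (m + n) with hM
  have hZsq : (A ^ m * B ^ n) ^ 2 = (A ^ 2) ^ m * (B ^ 2) ^ n := by ring
  have hcsq : (c ^ m * c ^ n) ^ 2 = (c ^ 2) ^ (m + n) := by ring
  have hamgm : (A ^ 2) ^ m * (B ^ 2) ^ n ≤ M ^ (m + n) :=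
    pow_mul_pow_le_weighted_mean_pow (sq_nonneg A) (sq_nonneg B)
  have hMc : M ^ (m + n) ≤ (c ^ 2) ^ (m + n) := pow_le_pow_left₀ (by positivity)
    (mean_sq_le_of_constraints (by positivity) (by positivity) hmn htrace hham) _
  have hle : A ^ m * B ^ n ≤ c ^ m * c ^ n :=
    (pow_le_pow_iff_left₀ (by positivity) (by positivity) two_ne_zero).1
      (by rw [hZsq, hcsq]; exact hamgm.trans hMc)
  refine ⟨hle, fun heq => ?_, fun ⟨hAc, hBc, _, _⟩ => by rw [hAc, hBc]⟩
  have hZeq : (A ^ 2) ^ m * (B ^ 2) ^ n = (c ^ 2) ^ (m + n) := by rw [← hZsq, heq, hcsq]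
  have hMeq : M = c ^ 2 := (pow_left_inj₀ (by positivity) (by positivity) (by omega)).1
    (le_antisymm hMc (hZeq ▸ hamgm))
  have hAB : A = B := (pow_left_inj₀ hA hB two_ne_zero).1 <| not_not.1 fun hne =>
    ((pow_mul_pow_lt_weighted_mean_pow_iff hm0 hn0 (sq_nonneg A) (sq_nonneg B)).2 hne).ne
      (by rw [hZeq, ← hM, hMeq])
  have hPQ : P = Q :=
    (mean_sq_eq_iff_of_constraints (by positivity) (by positivity) hmn htrace hham).1 hMeq
  subst hAB hPQ
  have hAc : A = c := (pow_left_inj₀ hA (by positivity) two_ne_zero).1 <| by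
    rw [← hMeq, hM]; field_simp
  have hPc : P = c := by rw [hc, eq_div_iff (by positivity)]; linear_combination htrace
  exact ⟨hAc, hAc, hPc, hPc⟩
end

section
/- Let m, n > 1 be integers. At the fixed point F* where P = Q = 1/(m+n) and the constraints mP + nQ = 1, mP² + nQ² + (m+n−1)(mA² + nB²) = 1 hold with A, B > 0, the third derivative of Z = A^m B^n along the flow equals −2Z(m+n)(m+n−1)²[m(A² − 1/(m+n)²)² + n(B² − 1/(m+n)²)²]; in particular Z''' ≤ 0 with equality iff A = B = 1/(m+n). -/
/-!
Along the flow, `Z'/Z = m(P - S) + n(Q - S) = 1 - (m+n)S` with `S = mP² + nQ²`, because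
`mP + nQ = 1`. Writing `W = 1 - (m+n)S`, this gives `Z''' = Z (W³ + 3WW' + W'')`, and at `F*`
we have `S = 1/(m+n)`, so `W = 0` and `Z''' = -(m+n) Z S''`. Differentiating `mP + nQ = 1` twice
kills the terms of `S''` that contain `P''` and `Q''` (their coefficients `2P`, `2Q` are equal at
`F*`), leaving `S'' = 2(mP'² + nQ'²)`; finally `P' = (m+n-1)(1/(m+n)² - A²)` at `F*`, and
likewise for `Q'`.
-/

theorem iteratedDeriv_three_of_hasDerivAt_mul_self {f w w' : ℝ → ℝ} {w'' t₀ : ℝ}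
    (hf : ∀ t, HasDerivAt f (f t * w t) t) (hw : ∀ t, HasDerivAt w (w' t) t)
    (hw' : HasDerivAt w' w'' t₀) :
    iteratedDeriv 3 f t₀ = f t₀ * (w t₀ ^ 3 + 3 * w t₀ * w' t₀ + w'') := by
  have h₁ : deriv f = fun t => f t * w t := funext fun t => (hf t).deriv
  have h₂ : deriv (fun t => f t * w t) = fun t => f t * (w t ^ 2 + w' t) :=
    funext fun t => ((hf t).mul (hw t)).deriv.trans (by ring)
  have h₃ : HasDerivAt (fun t => f t * (w t ^ 2 + w' t))
      (f t₀ * w t₀ * (w t₀ ^ 2 + w' t₀) + f t₀ * (2 * w t₀ * w' t₀ + w'')) t₀ :=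
    ((hf t₀).mul (((hw t₀).pow 2).add hw')).congr_deriv
      (by simp only [Pi.add_apply, Pi.pow_apply, Nat.cast_ofNat, Nat.add_one_sub_one, pow_one])
  rw [iteratedDeriv_succ, iteratedDeriv_succ, iteratedDeriv_one, h₁, h₂, h₃.deriv]
  ring

theorem HasDerivAt.pow_of_mul_self {A : ℝ → ℝ} {a t : ℝ} (hA : HasDerivAt A (A t * a) t)
    (m : ℕ) : HasDerivAt (fun t => A t ^ m) (A t ^ m * (m * a)) t := by
  refine (hA.pow m).congr_deriv ?_
  rcases m with _ | m
  · simp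
  · simp only [Nat.cast_add, Nat.cast_one, add_tsub_cancel_right, pow_succ]
    ring

theorem HasDerivAt.pow_mul_pow {A B : ℝ → ℝ} {a b t : ℝ} (hA : HasDerivAt A (A t * a) t)
    (hB : HasDerivAt B (B t * b) t) (m n : ℕ) :
    HasDerivAt (fun t => A t ^ m * B t ^ n) (A t ^ m * B t ^ n * (m * a + n * b)) t :=
  ((hA.pow_of_mul_self m).mul (hB.pow_of_mul_self n)).congr_deriv (by ring)

section WeightedSquares

variable {a b : ℝ} {P Q : ℝ → ℝ}

theorem weighted_add_deriv_eq_zero_of_const {k p q t : ℝ} (hP : HasDerivAt P p t)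
    (hQ : HasDerivAt Q q t) (hline : ∀ t, a * P t + b * Q t = k) : a * p + b * q = 0 := by
  have h : HasDerivAt (fun t => a * P t + b * Q t) (a * p + b * q) t :=
    (hP.const_mul a).add (hQ.const_mul b)
  rw [show (fun t => a * P t + b * Q t) = fun _ => k from funext hline] at h
  exact h.unique (hasDerivAt_const t k)

theorem HasDerivAt.weighted_sq_add {p q t : ℝ} (hP : HasDerivAt P p t) (hQ : HasDerivAt Q q t) :
    HasDerivAt (fun t => a * P t ^ 2 + b * Q t ^ 2) (2 * (a * P t * p + b * Q t * q)) t :=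
  (((hP.pow 2).const_mul a).add ((hQ.pow 2).const_mul b)).congr_deriv
    (by simp only [Nat.cast_ofNat, Nat.add_one_sub_one, pow_one]; ring)

theorem hasDerivAt_weighted_mul_deriv_of_eq {p q : ℝ → ℝ} {k p₂ q₂ t₀ : ℝ}
    (hP : ∀ t, HasDerivAt P (p t) t) (hQ : ∀ t, HasDerivAt Q (q t) t)
    (hline : ∀ t, a * P t + b * Q t = k) (hp : HasDerivAt p p₂ t₀) (hq : HasDerivAt q q₂ t₀)
    (hPQ : P t₀ = Q t₀) :
    HasDerivAt (fun t => 2 * (a * P t * p t + b * Q t * q t))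
      (2 * (a * p t₀ ^ 2 + b * q t₀ ^ 2)) t₀ := by
  have hpq : a * p₂ + b * q₂ = 0 :=
    weighted_add_deriv_eq_zero_of_const hp hq fun t =>
      weighted_add_deriv_eq_zero_of_const (hP t) (hQ t) hline
  refine ((((hP t₀).const_mul a).mul hp).add (((hQ t₀).const_mul b).mul hq)).const_mul 2
    |>.congr_deriv ?_
  rw [← hPQ]
  linear_combination 2 * P t₀ * hpq

end WeightedSquares

theorem weighted_sq_sub_sq_add_eq_zero_iff {a b c x y : ℝ} (ha : 0 < a) (hb : 0 < b)
    (hc : 0 ≤ c) (hx : 0 ≤ x) (hy : 0 ≤ y) :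
    a * (x ^ 2 - c ^ 2) ^ 2 + b * (y ^ 2 - c ^ 2) ^ 2 = 0 ↔ x = c ∧ y = c := by
  rw [add_eq_zero_iff_of_nonneg (by positivity) (by positivity)]
  simp [ha.ne', hb.ne', sub_eq_zero, sq_eq_sq₀ hx hc, sq_eq_sq₀ hy hc]

theorem Z_third_derivative_at_Fstar_general (m n : ℕ) (hm : 1 < m) (hn : 1 < n)
    (A B P Q : ℝ → ℝ)
    (hA : ∀ τ, HasDerivAt A (A τ * (P τ - ((m : ℝ) * (P τ) ^ 2 + n * (Q τ) ^ 2))) τ)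
    (hB : ∀ τ, HasDerivAt B (B τ * (Q τ - ((m : ℝ) * (P τ) ^ 2 + n * (Q τ) ^ 2))) τ)
    (hP : ∀ τ, HasDerivAt P (P τ * (1 - ((m : ℝ) * (P τ) ^ 2 + n * (Q τ) ^ 2))
      - ((m : ℝ) + n - 1) * (A τ) ^ 2) τ)
    (hQ : ∀ τ, HasDerivAt Q (Q τ * (1 - ((m : ℝ) * (P τ) ^ 2 + n * (Q τ) ^ 2))
      - ((m : ℝ) + n - 1) * (B τ) ^ 2) τ)
    (htrace : ∀ τ, (m : ℝ) * P τ + n * Q τ = 1)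
    (hApos : ∀ τ, 0 < A τ) (hBpos : ∀ τ, 0 < B τ)
    (τ₀ : ℝ) (hP0 : P τ₀ = 1 / ((m : ℝ) + n)) (hQ0 : Q τ₀ = 1 / ((m : ℝ) + n)) :
    iteratedDeriv 3 (fun t => A t ^ m * B t ^ n) τ₀ =
      -2 * (A τ₀ ^ m * B τ₀ ^ n) * ((m : ℝ) + n) * ((m : ℝ) + n - 1) ^ 2 *
        ((m : ℝ) * ((A τ₀) ^ 2 - (1 / ((m : ℝ) + n)) ^ 2) ^ 2
          + (n : ℝ) * ((B τ₀) ^ 2 - (1 / ((m : ℝ) + n)) ^ 2) ^ 2) ∧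
    iteratedDeriv 3 (fun t => A t ^ m * B t ^ n) τ₀ ≤ 0 ∧
    (iteratedDeriv 3 (fun t => A t ^ m * B t ^ n) τ₀ = 0 ↔
      A τ₀ = 1 / ((m : ℝ) + n) ∧ B τ₀ = 1 / ((m : ℝ) + n)) := by
  have hm₀ : (0 : ℝ) < m := by positivity
  have hn₀ : (0 : ℝ) < n := by positivity
  have hK : (0 : ℝ) < m + n - 1 := by
    have : (1 : ℝ) < m := by exact_mod_cast hm
    linarith
  have hZ : ∀ t, HasDerivAt (fun t => A t ^ m * B t ^ n)
      (A t ^ m * B t ^ n * (1 - (m + n) * ((m : ℝ) * P t ^ 2 + n * Q t ^ 2))) t := fun t =>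
    ((hA t).pow_mul_pow (hB t) m n).congr_deriv
      (by linear_combination A t ^ m * B t ^ n * htrace t)
  have hW := fun t =>
    (((hP t).weighted_sq_add (a := (m : ℝ)) (b := n) (hQ t)).const_mul ((m : ℝ) + n)).const_sub 1
  have hAd : Differentiable ℝ A := fun t => (hA t).differentiableAt
  have hBd : Differentiable ℝ B := fun t => (hB t).differentiableAt
  have hPd : Differentiable ℝ P := fun t => (hP t).differentiableAt
  have hQd : Differentiable ℝ Q := fun t => (hQ t).differentiableAt
  have hS'' := hasDerivAt_weighted_mul_deriv_of_eq hP hQ htrace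
    (DifferentiableAt.hasDerivAt (by fun_prop)) (DifferentiableAt.hasDerivAt (by fun_prop))
    (hP0.trans hQ0.symm)
  have key : iteratedDeriv 3 (fun t => A t ^ m * B t ^ n) τ₀ =
      -2 * (A τ₀ ^ m * B τ₀ ^ n) * ((m : ℝ) + n) * ((m : ℝ) + n - 1) ^ 2 *
        ((m : ℝ) * ((A τ₀) ^ 2 - (1 / ((m : ℝ) + n)) ^ 2) ^ 2
          + (n : ℝ) * ((B τ₀) ^ 2 - (1 / ((m : ℝ) + n)) ^ 2) ^ 2) := by
    rw [iteratedDeriv_three_of_hasDerivAt_mul_self hZ hW (hS''.const_mul ((m : ℝ) + n)).neg,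
      hP0, hQ0]
    field_simp
    ring
  have hZ₀ : 0 < A τ₀ ^ m * B τ₀ ^ n := by have := hApos τ₀; have := hBpos τ₀; positivity
  have hc : (0 : ℝ) ≤ 1 / ((m : ℝ) + n) := by positivity
  have hfactor : 0 < 2 * (A τ₀ ^ m * B τ₀ ^ n) * ((m : ℝ) + n) * ((m : ℝ) + n - 1) ^ 2 := by
    positivity
  refine ⟨key, ?_, ?_⟩
  · rw [key, neg_mul, neg_mul, neg_mul, neg_mul, neg_nonpos]
    positivity
  · rw [key, neg_mul, neg_mul, neg_mul, neg_mul, neg_eq_zero, mul_eq_zero,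
      or_iff_right hfactor.ne',
      weighted_sq_sub_sq_add_eq_zero_iff hm₀ hn₀ hc (hApos τ₀).le (hBpos τ₀).le]

/-- At points of the flow where `P = Q = 1/(m+n)` and the constraints hold, the third
derivative of `Z = A^m B^n` along the flow equals
`-2 Z (m+n)(m+n-1)² [m(A² - 1/(m+n)²)² + n(B² - 1/(m+n)²)²]`; in particular `Z''' ≤ 0`,
with equality iff `A = B = 1/(m+n)`. -/
theorem Z_third_derivative_at_Fstar (m n : ℕ) (hm : 1 < m) (hn : 1 < n)
    (A B P Q : ℝ → ℝ)
    (hA : ∀ τ, HasDerivAt A (A τ * (P τ - ((m : ℝ) * (P τ) ^ 2 + n * (Q τ) ^ 2))) τ)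
    (hB : ∀ τ, HasDerivAt B (B τ * (Q τ - ((m : ℝ) * (P τ) ^ 2 + n * (Q τ) ^ 2))) τ)
    (hP : ∀ τ, HasDerivAt P (P τ * (1 - ((m : ℝ) * (P τ) ^ 2 + n * (Q τ) ^ 2))
      - ((m : ℝ) + n - 1) * (A τ) ^ 2) τ)
    (hQ : ∀ τ, HasDerivAt Q (Q τ * (1 - ((m : ℝ) * (P τ) ^ 2 + n * (Q τ) ^ 2))
      - ((m : ℝ) + n - 1) * (B τ) ^ 2) τ)
    (htrace : ∀ τ, (m : ℝ) * P τ + n * Q τ = 1)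
    (hham : ∀ τ, (m : ℝ) * (P τ) ^ 2 + n * (Q τ) ^ 2
      + ((m : ℝ) + n - 1) * ((m : ℝ) * (A τ) ^ 2 + n * (B τ) ^ 2) = 1)
    (hApos : ∀ τ, 0 < A τ) (hBpos : ∀ τ, 0 < B τ)
    (τ₀ : ℝ) (hP0 : P τ₀ = 1 / ((m : ℝ) + n)) (hQ0 : Q τ₀ = 1 / ((m : ℝ) + n)) :
    iteratedDeriv 3 (fun t => A t ^ m * B t ^ n) τ₀ =
      -2 * (A τ₀ ^ m * B τ₀ ^ n) * ((m : ℝ) + n) * ((m : ℝ) + n - 1) ^ 2 *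
        ((m : ℝ) * ((A τ₀) ^ 2 - (1 / ((m : ℝ) + n)) ^ 2) ^ 2
          + (n : ℝ) * ((B τ₀) ^ 2 - (1 / ((m : ℝ) + n)) ^ 2) ^ 2) ∧
    iteratedDeriv 3 (fun t => A t ^ m * B t ^ n) τ₀ ≤ 0 ∧
    (iteratedDeriv 3 (fun t => A t ^ m * B t ^ n) τ₀ = 0 ↔
      A τ₀ = 1 / ((m : ℝ) + n) ∧ B τ₀ = 1 / ((m : ℝ) + n)) :=
  Z_third_derivative_at_Fstar_general m n hm hn A B P Q hA hB hP hQ htrace hApos hBpos τ₀ hP0 hQ0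
end

section
/- Let m, n > 1 be integers. On the boundary B = 0 of the constraint set with k_g = −1 (so mP + nQ = 1 and mP² + nQ² + (m+n−1)mA² = 1), the acceleration expression −(1−P)² + (m+n−1)(m−1)A² equals −(m/n)(m+n−1)(P − 1/m)² up to a positive factor; in particular it is ≤ 0, with equality exactly at P = 1/m. -/
/-! Eliminating `Q` with the trace constraint `mP + nQ = 1`, the Hamiltonian constraint gives
`A²` as a quadratic polynomial in `P`; substituting it, the acceleration becomes a quadratic in `P`
with leading coefficient `-m(m+n-1)/n` and a double root at `P = 1/m`. -/

theorem acceleration_eq_neg_mul_sq {m n P Q A : ℝ} (hm : m ≠ 0) (hn : n ≠ 0)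
    (htrace : m * P + n * Q = 1)
    (hham : m * P ^ 2 + n * Q ^ 2 + (m + n - 1) * (m * A ^ 2) = 1) :
    -(1 - P) ^ 2 + (m + n - 1) * ((m - 1) * A ^ 2) = -(m / n) * (m + n - 1) * (P - 1 / m) ^ 2 := by
  field_simp
  linear_combination (n * (m - 1)) * hham - ((m - 1) * (n * Q + 1 - m * P)) * htrace

theorem neg_mul_sq_nonpos_and_eq_zero_iff {c x : ℝ} (hc : 0 < c) :
    -c * x ^ 2 ≤ 0 ∧ (-c * x ^ 2 = 0 ↔ x = 0) := by
  refine ⟨?_, ?_⟩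
  · nlinarith [sq_nonneg x]
  · simp [hc.ne']

/-- On the boundary `B = 0` of the constraint set (with `k_g = -1`), the acceleration
expression equals `-(m/n)(m+n-1)(P - 1/m)²`; in particular it is `≤ 0`, vanishing
exactly at `P = 1/m`. -/
theorem acceleration_on_B_boundary (m n : ℕ) (hm : 1 < m) (hn : 1 < n)
    (P Q A : ℝ)
    (htrace : (m : ℝ) * P + n * Q = 1)
    (hham : (m : ℝ) * P ^ 2 + n * Q ^ 2 + ((m : ℝ) + n - 1) * ((m : ℝ) * A ^ 2) = 1) :
    -(1 - P) ^ 2 + ((m : ℝ) + n - 1) * (((m : ℝ) - 1) * A ^ 2)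
      = -((m : ℝ) / n) * ((m : ℝ) + n - 1) * (P - 1 / (m : ℝ)) ^ 2 ∧
    -(1 - P) ^ 2 + ((m : ℝ) + n - 1) * (((m : ℝ) - 1) * A ^ 2) ≤ 0 ∧
    (-(1 - P) ^ 2 + ((m : ℝ) + n - 1) * (((m : ℝ) - 1) * A ^ 2) = 0 ↔ P = 1 / (m : ℝ)) := by
  have hm₁ : (1 : ℝ) < m := by exact_mod_cast hm
  have hn₁ : (1 : ℝ) < n := by exact_mod_cast hn
  have heq := acceleration_eq_neg_mul_sq (by positivity) (by positivity) htrace hham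
  have hcoeff : 0 < (m : ℝ) / n * ((m : ℝ) + n - 1) := by
    have : (0 : ℝ) < (m : ℝ) + n - 1 := by linarith
    positivity
  obtain ⟨hnonpos, hzero⟩ := neg_mul_sq_nonpos_and_eq_zero_iff (x := P - 1 / (m : ℝ)) hcoeff
  rw [neg_mul_eq_neg_mul] at hnonpos hzero
  rw [heq]
  exact ⟨rfl, hnonpos, hzero.trans sub_eq_zero⟩
end
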